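/- arXiv:1605.09109 — 3 statements merged into one kernel-verified Lean document; each statement's English description precedes it below -/
import Mathlib

section
/- Let K be an n×n matrix such that K^c := (U_{i−1}^c)^H S K S U_{i−1}^c is Hermitian positive definite (an effectively positive definite preconditioner). Let u be a unit S-norm vector S-orthogonal to U_{i−1} with Rayleigh quotient λ = ρ(u) and nonzero residual r = Hu − λSu, let p = −Kr, and suppose λ is not an eigenvalue of (H,S). Then the matrix Z = [U_{i−1} u p] has full column rank. -/
/-!
Write `y = Uᴴ r` for the coordinates of the residual in the `S`-orthonormal eigenbasis. From
`Uᴴ H = Λ Uᴴ S` one gets `y = (Λ - λ) Uᴴ S u`, which vanishes on the first `m` indices because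
`u ⊥_S U_{i-1}`. Hence the functional `x ↦ rᴴ x` kills the columns of `U_{i-1}`, and it kills `u`
because `λ` is the Rayleigh quotient. But `r = S U y`, so `rᴴ p = -rᴴ K r = -yᴴ (Uᴴ S K S U) y`
is minus a value of the positive definite form `Kᶜ` at the nonzero tail of `y`. Thus `p` lies
outside the span of `U_{i-1}` and `u`; likewise `x ↦ (S u)ᴴ x` separates `u` from `U_{i-1}`,
whose columns are independent because `U` is invertible.
-/

open Matrix
open scoped ComplexOrder

section DotProduct

variable {R ι κ : Type*} [Fintype ι]

theorem notMem_span_range_of_dotProduct [CommSemiring R] {v : κ → ι → R} {x y : ι → R}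
    (hv : ∀ i, y ⬝ᵥ v i = 0) (hx : y ⬝ᵥ x ≠ 0) : x ∉ Submodule.span R (Set.range v) :=
  fun hmem => hx <|
    (Submodule.span_le (p := LinearMap.ker (dotProductBilin R R y))).mpr
      (Set.range_subset_iff.mpr hv) hmem

theorem linearIndependent_snoc_snoc_of_dotProduct [Field R] {m : ℕ} {v : Fin m → ι → R}
    (hv : LinearIndependent R v) {a b y z : ι → R} (hyv : ∀ j, y ⬝ᵥ v j = 0) (hya : y ⬝ᵥ a ≠ 0)
    (hzv : ∀ j, z ⬝ᵥ v j = 0) (hza : z ⬝ᵥ a = 0) (hzb : z ⬝ᵥ b ≠ 0) :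
    LinearIndependent R (Fin.snoc (Fin.snoc v a) b : Fin (m + 2) → ι → R) := by
  refine (hv.finSnoc (notMem_span_range_of_dotProduct hyv hya)).finSnoc
    (notMem_span_range_of_dotProduct (fun i => ?_) hzb)
  induction i using Fin.lastCases with
  | last => simpa using hza
  | cast j => simpa using hzv j

theorem star_dotProduct_col [CommSemiring R] [StarRing R] (A : Matrix ι κ R) (x : ι → R)
    (j : κ) : star x ⬝ᵥ A.col j = star ((Aᴴ *ᵥ x) j) := by
  simp [dotProduct, mulVec, star_sum, mul_comm]

theorem star_mulVec_dotProduct_mulVec [CommSemiring R] [StarRing R] [Fintype κ]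
    (A : Matrix ι κ R) (K : Matrix ι ι R) (c : κ → R) :
    star (A *ᵥ c) ⬝ᵥ K *ᵥ (A *ᵥ c) = star c ⬝ᵥ (Aᴴ * K * A) *ᵥ c := by
  rw [star_mulVec, ← dotProduct_mulVec, mulVec_mulVec, mulVec_mulVec, Matrix.mul_assoc]

theorem dotProduct_mulVec_eq_submatrix [CommSemiring R] [StarRing R] [Fintype κ]
    (M : Matrix ι ι R) {e : κ → ι} (he : Function.Injective e) {y : ι → R}
    (hy : ∀ i ∉ Set.range e, y i = 0) :
    star y ⬝ᵥ M *ᵥ y = star (y ∘ e) ⬝ᵥ M.submatrix e e *ᵥ (y ∘ e) := by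
  have hMy (i : ι) : (M *ᵥ y) i = ∑ j, M i (e j) * y (e j) :=
    (Fintype.sum_of_injective e he _ _ (fun k hk => by simp [hy k hk]) fun _ => rfl).symm
  exact (Fintype.sum_of_injective e he _ _ (fun k hk => by simp [hy k hk])
    fun j => by rw [hMy]; rfl).symm

theorem dotProduct_mulVec_pos_of_posDef_submatrix [CommRing R] [PartialOrder R] [StarRing R]
    [Fintype κ] {M : Matrix ι ι R} {e : κ → ι} (he : Function.Injective e)
    (hM : (M.submatrix e e).PosDef) {y : ι → R} (hy : ∀ i ∉ Set.range e, y i = 0)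
    (hy0 : y ≠ 0) : 0 < star y ⬝ᵥ M *ᵥ y := by
  rw [dotProduct_mulVec_eq_submatrix M he hy]
  refine hM.dotProduct_mulVec_pos fun h => hy0 (funext fun i => ?_)
  by_cases hi : i ∈ Set.range e
  · obtain ⟨j, rfl⟩ := hi
    exact congrFun h j
  · exact hy i hi

theorem dotProduct_mulVec_pos_of_posDef_trailing [CommRing R] [PartialOrder R] [StarRing R]
    {n m : ℕ} {M : Matrix (Fin n) (Fin n) R}
    (hM : (M.submatrix (fun k : Fin (n - m) => (⟨m + k.1, by have := k.2; omega⟩ : Fin n))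
      (fun k => ⟨m + k.1, by have := k.2; omega⟩)).PosDef)
    {y : Fin n → R} (hy : ∀ k : Fin n, (k : ℕ) < m → y k = 0) (hy0 : y ≠ 0) :
    0 < star y ⬝ᵥ M *ᵥ y := by
  refine dotProduct_mulVec_pos_of_posDef_submatrix
    (fun a b h => Fin.ext (Nat.add_left_cancel (congrArg Fin.val h))) hM (fun k hk => hy k ?_) hy0
  by_contra hkm
  exact hk ⟨⟨k - m, by omega⟩, Fin.ext (Nat.add_sub_of_le (not_lt.mp hkm))⟩

theorem star_residual_dotProduct_eq_zero [CommRing R] [StarRing R] {H S : Matrix ι ι R}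
    {u : ι → R} (hu : star u ⬝ᵥ S *ᵥ u = 1) {ρ : R} (hρ : ρ = star u ⬝ᵥ H *ᵥ u) :
    star (H *ᵥ u - ρ • S *ᵥ u) ⬝ᵥ u = 0 := by
  rw [star_dotProduct, dotProduct_sub, dotProduct_smul, hu, ← hρ, smul_eq_mul, mul_one,
    sub_self, star_zero]

end DotProduct

section GeneralizedEigenbasis

variable {R ι : Type*} [CommRing R] [StarRing R] [Fintype ι] [DecidableEq ι]
  {H S U : Matrix ι ι R}

theorem mul_conjTranspose_mul_eq_one (hU : Uᴴ * S * U = 1) : U * (Uᴴ * S) = 1 :=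
  mul_eq_one_comm.mp hU

theorem mul_mul_conjTranspose_eq_one (hS : S.IsHermitian) (hU : Uᴴ * S * U = 1) :
    S * U * Uᴴ = 1 := by
  simpa [Matrix.mul_assoc, hS.eq] using congrArg conjTranspose (mul_conjTranspose_mul_eq_one hU)

theorem star_dotProduct_mulVec_eq_conjTranspose_mulVec (hS : S.IsHermitian)
    (hU : Uᴴ * S * U = 1) (K : Matrix ι ι R) (x : ι → R) :
    star x ⬝ᵥ K *ᵥ x = star (Uᴴ *ᵥ x) ⬝ᵥ (Uᴴ * S * K * S * U) *ᵥ (Uᴴ *ᵥ x) := by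
  conv_lhs => rw [← one_mulVec x, ← mul_mul_conjTranspose_eq_one hS hU, ← mulVec_mulVec]
  rw [star_mulVec_dotProduct_mulVec, conjTranspose_mul, hS.eq]
  simp only [Matrix.mul_assoc]

theorem conjTranspose_mul_eq_of_mul_eq (hU : Uᴴ * S * U = 1) {Λ : Matrix ι ι R}
    (heig : H * U = S * U * Λ) : Uᴴ * H = Λ * (Uᴴ * S) :=
  calc Uᴴ * H = Uᴴ * (H * U) * (Uᴴ * S) := by
        rw [Matrix.mul_assoc, Matrix.mul_assoc, mul_conjTranspose_mul_eq_one hU, Matrix.mul_one]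
    _ = Λ * (Uᴴ * S) := by
        rw [heig, ← Matrix.mul_assoc Uᴴ (S * U), ← Matrix.mul_assoc Uᴴ S U, hU, Matrix.one_mul]

theorem conjTranspose_mulVec_residual (hU : Uᴴ * S * U = 1) {d : ι → R}
    (heig : H * U = S * U * diagonal d) (u : ι → R) (μ : R) (k : ι) :
    (Uᴴ *ᵥ (H *ᵥ u - μ • S *ᵥ u)) k = (d k - μ) * (Uᴴ *ᵥ (S *ᵥ u)) k := by
  rw [mulVec_sub, mulVec_smul, mulVec_mulVec, conjTranspose_mul_eq_of_mul_eq hU heig,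
    Pi.sub_apply, Pi.smul_apply, ← mulVec_mulVec, mulVec_diagonal, ← mulVec_mulVec, smul_eq_mul]
  ring

end GeneralizedEigenbasis

-- `m` is the paper's `i - 1`: the columns `U k j` with `j < m` form `U_{i-1}`.
/-- Breakdown-free property: if `r ≠ 0` and the preconditioner `K` is effectively positive
definite (`Kᶜ = (U_{i−1}ᶜ)ᴴ S K S U_{i−1}ᶜ ≻ 0`), then `Z = [U_{i−1} u p]` has full column
rank. (0-based: `m = i − 1` previously computed eigenvectors.) -/
theorem stmt6 {n m : ℕ} (hmn : m < n)
    (H S U Λ K : Matrix (Fin n) (Fin n) ℂ) (lam : Fin n → ℝ)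
    (hS : S.PosDef)
    (hΛ : Λ = Matrix.diagonal fun k => (lam k : ℂ))
    (hortho : Uᴴ * S * U = 1)
    (heig : H * U = S * U * Λ)
    (u : Fin n → ℂ)
    (huorth : ∀ k : Fin n, (k : ℕ) < m → (Uᴴ *ᵥ (S *ᵥ u)) k = 0)
    (hunorm : star u ⬝ᵥ (S *ᵥ u) = 1)
    (lam0 : ℝ) (hlam0 : (lam0 : ℂ) = star u ⬝ᵥ (H *ᵥ u))
    (r : Fin n → ℂ) (hr : r = H *ᵥ u - (lam0 : ℂ) • (S *ᵥ u)) (hrne : r ≠ 0)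
    (p : Fin n → ℂ) (hp : p = -(K *ᵥ r))
    (Kc : Matrix (Fin (n - m)) (Fin (n - m)) ℂ)
    (hKc : Kc = (Uᴴ * S * K * S * U).submatrix
      (fun k => (⟨m + k.1, by have := k.2; omega⟩ : Fin n))
      (fun k => (⟨m + k.1, by have := k.2; omega⟩ : Fin n)))
    (hKcpd : Kc.PosDef)
    (cols : Fin (m + 2) → Fin n → ℂ)
    (hcols : cols = fun (j : Fin (m + 2)) (k : Fin n) =>
      if h : (j : ℕ) < m then U k ⟨(j : ℕ), by omega⟩
      else if (j : ℕ) = m then u k else p k) :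
    LinearIndependent ℂ cols := by
  subst hΛ hKc
  have hUr (k : Fin n) (hk : (k : ℕ) < m) : (Uᴴ *ᵥ r) k = 0 := by
    rw [hr, conjTranspose_mulVec_residual hortho heig, huorth k hk, mul_zero]
  have hUr0 : Uᴴ *ᵥ r ≠ 0 := fun h => hrne <| by
    rw [← one_mulVec r, ← mul_mul_conjTranspose_eq_one hS.isHermitian hortho, ← mulVec_mulVec, h,
      mulVec_zero]
  have hcols_snoc : cols = Fin.snoc (Fin.snoc (U.col ∘ Fin.castLE hmn.le) u) p := by
    subst hcols
    funext j k
    induction j using Fin.lastCases with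
    | last => simp
    | cast j =>
      induction j using Fin.lastCases with
      | last => simp
      | cast j => simp only [Fin.snoc_castSucc]; exact dif_pos j.2
  rw [hcols_snoc]
  refine linearIndependent_snoc_snoc_of_dotProduct
    ((linearIndependent_cols_of_isUnit (.of_mul_eq_one_right _ hortho)).comp _
      (Fin.castLE_injective _)) (y := star (S *ᵥ u)) (z := star r)
    (fun j => ?_) ?_ (fun j => ?_) (hr ▸ star_residual_dotProduct_eq_zero hunorm hlam0) ?_
  · rw [Function.comp_apply, star_dotProduct_col, huorth _ j.2, star_zero]
  · rw [star_mulVec, ← dotProduct_mulVec, hS.isHermitian.eq, hunorm]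
    exact one_ne_zero
  · rw [Function.comp_apply, star_dotProduct_col, hUr _ j.2, star_zero]
  · rw [hp, dotProduct_neg, neg_ne_zero,
      star_dotProduct_mulVec_eq_conjTranspose_mulVec hS.isHermitian hortho]
    exact (dotProduct_mulVec_pos_of_posDef_trailing hKcpd hUr hUr0).ne'
end

section
/- Under the factorization Z = [U_{i−1} u p] with U_{i−1}^H S u = 0 and u^H S u = 1, the projected pencil (Z^H H Z, Z^H S Z) is congruent via a unit lower triangular matrix L to the block-diagonal pair (diag(Λ_{i−1}, H_⊥), diag(I_{i−1}, S_⊥)), where H_⊥ = Z_⊥^H H Z_⊥, S_⊥ = Z_⊥^H S Z_⊥, Z_⊥ = [u p_⊥], and p_⊥ = U_{i−1}^c (U_{i−1}^c)^H S p. Consequently det(Z^H H Z − μ Z^H S Z) = det(Λ_{i−1} − μI)·det(H_⊥ − μS_⊥) for all μ. -/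
/-!
Write `Z = [V Y]` with `V` the first `m` columns of `U` and `Y = [u p]`. Right multiplication by
the block unit upper triangular `Lᴴ = [[1, -VᴴSY], [0, 1]]` replaces `Y` by `Y - V VᴴSY`, its
component `S`-orthogonal to the range of `V`. This is `Z⊥ = [u p⊥]`: `VᴴSu = 0`, and `U Uᴴ S = 1`
gives `p - V VᴴSp = p⊥`. Since `V` is `S`-orthonormal and `VᴴH = Λ VᴴS`, the congruence turns both
`ZᴴHZ` and `ZᴴSZ` into block diagonal matrices, and `det L = 1` gives the determinant identity.
-/

open Matrix
open scoped ComplexOrder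

namespace Matrix

section Columns

theorem mul_mul_mul_apply {R l m n o p : Type*} [Semiring R] [Fintype m] [Fintype n] [Fintype o]
    (A : Matrix l m R) (B : Matrix m n R) (C : Matrix n o R) (X : Matrix o p R) (i : l) (j : p) :
    (A * (B * C * X)) i j = (A *ᵥ (B *ᵥ (C *ᵥ fun k => X k j))) i := by
  simp only [Matrix.mul_assoc]
  rfl

theorem mul_submatrix_eq_of_mul_eq_mul_diagonal {R ι κ ν : Type*} [Semiring R] [Fintype ι]
    [Fintype κ] [Fintype ν] [DecidableEq κ] [DecidableEq ν] {H S : Matrix ι ι R}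
    {U : Matrix ι κ R} {d : κ → R} (h : H * U = S * U * diagonal d) (f : ν → κ) :
    H * U.submatrix id f = S * U.submatrix id f * diagonal (d ∘ f) := by
  ext k j
  have h := congrFun (congrFun h k) (f j)
  rw [mul_diagonal] at h
  rw [mul_diagonal]
  simpa [mul_apply] using h

theorem mulVec_ite_lt {R ι : Type*} [NonUnitalNonAssocSemiring R] {m n : ℕ} (hm : m ≤ n)
    (A : Matrix ι (Fin n) R) (x : Fin n → R) :
    A *ᵥ (fun k => if (k : ℕ) < m then x k else 0) =
      A.submatrix id (Fin.castLE hm) *ᵥ (x ∘ Fin.castLE hm) := by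
  ext i
  refine (Fintype.sum_of_injective _ (Fin.castLE_injective hm) _ _ ?_ fun _ => ?_).symm
  · rintro k hk
    have : ¬ (k : ℕ) < m := fun h => hk ⟨⟨k, h⟩, rfl⟩
    simp [this]
  · simp

theorem mulVec_ite_lt_zero_eq_sub {R : Type*} [CommRing R] [StarRing R] {m n : ℕ} (hm : m ≤ n)
    {U S : Matrix (Fin n) (Fin n) R} (hU : Uᴴ * S * U = 1) (p : Fin n → R) :
    U *ᵥ (fun k => if (k : ℕ) < m then 0 else (Uᴴ *ᵥ (S *ᵥ p)) k) =
      p - U.submatrix id (Fin.castLE hm) *ᵥ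
        ((U.submatrix id (Fin.castLE hm))ᴴ *ᵥ (S *ᵥ p)) := by
  have hp : U *ᵥ (Uᴴ *ᵥ (S *ᵥ p)) = p := by
    rw [mulVec_mulVec, mulVec_mulVec, Matrix.mul_assoc, mul_eq_one_comm.mp hU, one_mulVec]
  have hc : (U.submatrix id (Fin.castLE hm))ᴴ *ᵥ (S *ᵥ p) = (Uᴴ *ᵥ (S *ᵥ p)) ∘ Fin.castLE hm :=
    rfl
  rw [hc, ← mulVec_ite_lt, eq_sub_iff_add_eq, ← mulVec_add]
  convert hp using 2
  ext k
  by_cases hk : (k : ℕ) < m <;> simp [hk]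

end Columns

section Shear

variable {R ι κ m₁ m₂ : Type*} [Ring R] [Fintype m₁] [Fintype m₂] [DecidableEq m₁]
  [DecidableEq m₂]

theorem fromCols_mul_fromBlocks_one_neg_zero_one (V : Matrix ι m₁ R) (Y : Matrix ι m₂ R)
    (C : Matrix m₁ m₂ R) :
    -- without the ascription `*` elaborates to the `CStarMatrix` multiplication
    fromCols V Y * (fromBlocks 1 (-C) 0 1 : Matrix (m₁ ⊕ m₂) (m₁ ⊕ m₂) R) =
      fromCols V (Y - V * C) := by
  simp [fromCols_mul_fromBlocks, sub_eq_neg_add]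

theorem submatrix_fromCols_mul_reindex_fromBlocks_one_neg_zero_one [Fintype κ]
    (e : m₁ ⊕ m₂ ≃ κ) (V : Matrix ι m₁ R) (Y : Matrix ι m₂ R) (C : Matrix m₁ m₂ R) :
    (fromCols V Y).submatrix id e.symm * reindex e e (fromBlocks 1 (-C) 0 1) =
      (fromCols V (Y - V * C)).submatrix id e.symm := by
  simp [← fromCols_mul_fromBlocks_one_neg_zero_one]

end Shear

section Triangular

variable {R : Type*}

theorem reindex_fromBlocks_one_zero_one_apply_of_lt [Zero R] [One R] {a b : ℕ}
    (C : Matrix (Fin b) (Fin a) R) {i j : Fin (a + b)} (hij : i < j) :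
    reindex finSumFinEquiv finSumFinEquiv (fromBlocks 1 0 C 1) i j = 0 := by
  induction i using Fin.addCases <;> induction j using Fin.addCases <;>
    simp only [Fin.lt_def, Fin.val_castAdd, Fin.val_natAdd] at hij <;>
    simp [one_apply, Fin.ext_iff, hij.ne] <;> omega

theorem reindex_fromBlocks_one_zero_one_apply_self [Zero R] [One R] {a b : ℕ}
    (C : Matrix (Fin b) (Fin a) R) (i : Fin (a + b)) :
    reindex finSumFinEquiv finSumFinEquiv (fromBlocks 1 0 C 1) i i = 1 := by
  induction i using Fin.addCases <;> simp

theorem det_reindex_fromBlocks_one_zero_one {m₁ m₂ κ : Type*} [CommRing R] [Fintype m₁]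
    [Fintype m₂] [DecidableEq m₁] [DecidableEq m₂] [Fintype κ] [DecidableEq κ] (e : m₁ ⊕ m₂ ≃ κ)
    (C : Matrix m₂ m₁ R) :
    (reindex e e (fromBlocks 1 0 C 1)).det = 1 := by
  rw [det_reindex_self, det_fromBlocks_zero₁₂, det_one, det_one, one_mul]

end Triangular

section Congruence

variable {R ι κ ν m₁ m₂ : Type*} [Semiring R] [StarRing R] [Fintype ι]

theorem conjTranspose_submatrix_mul_mul_submatrix (A : Matrix ι κ R) (M : Matrix ι ι R)
    (f : ν → κ) :
    (A.submatrix id f)ᴴ * M * A.submatrix id f = (Aᴴ * M * A).submatrix f f := by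
  ext i j
  simp [mul_apply]

theorem mul_conjTranspose_mul_mul_mul_conjTranspose [Fintype κ] (L : Matrix κ κ R)
    (Z : Matrix ι κ R) (M : Matrix ι ι R) :
    L * (Zᴴ * M * Z) * Lᴴ = (Z * Lᴴ)ᴴ * M * (Z * Lᴴ) := by
  simp only [conjTranspose_mul, conjTranspose_conjTranspose, Matrix.mul_assoc]

theorem conjTranspose_mul_eq_mul_conjTranspose_mul_of_mul_eq [Fintype ν] {H S : Matrix ι ι R}
    {V : Matrix ι ν R} {D : Matrix ν ν R} (hH : H.IsHermitian) (hS : S.IsHermitian)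
    (hD : D.IsHermitian) (hV : H * V = S * V * D) :
    Vᴴ * H = D * (Vᴴ * S) := by
  simpa [conjTranspose_mul, hH.eq, hS.eq, hD.eq, Matrix.mul_assoc] using congrArg conjTranspose hV

theorem conjTranspose_fromCols_mul_mul_fromCols (V : Matrix ι m₁ R) (W : Matrix ι m₂ R)
    (M : Matrix ι ι R) :
    (fromCols V W)ᴴ * M * fromCols V W =
      fromBlocks (Vᴴ * M * V) (Vᴴ * M * W) (Wᴴ * M * V) (Wᴴ * M * W) := by
  rw [conjTranspose_fromCols_eq_fromRows_conjTranspose, fromRows_mul, fromRows_mul_fromCols]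

theorem conjTranspose_fromCols_mul_mul_fromCols_of_conjTranspose_mul_mul_eq_zero
    {V : Matrix ι m₁ R} {W : Matrix ι m₂ R} {M : Matrix ι ι R} (hM : M.IsHermitian)
    (h : Vᴴ * M * W = 0) :
    (fromCols V W)ᴴ * M * fromCols V W = fromBlocks (Vᴴ * M * V) 0 0 (Wᴴ * M * W) := by
  have h' : Wᴴ * M * V = 0 := by
    simpa [conjTranspose_mul, hM.eq, Matrix.mul_assoc] using congrArg conjTranspose h
  rw [conjTranspose_fromCols_mul_mul_fromCols, h, h']

end Congruence

section Pencil

variable {R ι κ m₁ m₂ : Type*} [Ring R] [StarRing R] [Fintype ι] [Fintype κ]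
  [Fintype m₁] [Fintype m₂] [DecidableEq m₁] [DecidableEq m₂]
  {H S M : Matrix ι ι R} {V : Matrix ι m₁ R} {Y W : Matrix ι m₂ R} {Z : Matrix ι κ R}
  {L : Matrix κ κ R} {e : m₁ ⊕ m₂ ≃ κ}

omit [Fintype m₂] [DecidableEq m₂] in
theorem conjTranspose_mul_mul_sub_mul_eq_zero (hVS : Vᴴ * S * V = 1) :
    Vᴴ * S * (Y - V * (Vᴴ * S * Y)) = 0 := by
  rw [Matrix.mul_sub, ← Matrix.mul_assoc, hVS, Matrix.one_mul, sub_self]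

theorem shear_congr_eq_reindex (hZ : Z = (fromCols V Y).submatrix id e.symm)
    (hW : W = Y - V * (Vᴴ * S * Y)) (hL : L = reindex e e (fromBlocks 1 0 (-(Vᴴ * S * Y))ᴴ 1)) :
    L * (Zᴴ * M * Z) * Lᴴ = reindex e e ((fromCols V W)ᴴ * M * fromCols V W) := by
  have hLH : Lᴴ = reindex e e (fromBlocks 1 (-(Vᴴ * S * Y)) 0 1) := by
    simp [hL, fromBlocks_conjTranspose]
  rw [mul_conjTranspose_mul_mul_mul_conjTranspose, hZ, hLH,
    submatrix_fromCols_mul_reindex_fromBlocks_one_neg_zero_one,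
    conjTranspose_submatrix_mul_mul_submatrix, ← hW]
  rfl

theorem shear_congr_eq_reindex_fromBlocks_one (hS : S.IsHermitian) (hVS : Vᴴ * S * V = 1)
    (hZ : Z = (fromCols V Y).submatrix id e.symm) (hW : W = Y - V * (Vᴴ * S * Y))
    (hL : L = reindex e e (fromBlocks 1 0 (-(Vᴴ * S * Y))ᴴ 1)) :
    L * (Zᴴ * S * Z) * Lᴴ = reindex e e (fromBlocks 1 0 0 (Wᴴ * S * W)) := by
  have hVSW : Vᴴ * S * W = 0 := hW ▸ conjTranspose_mul_mul_sub_mul_eq_zero hVS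
  rw [shear_congr_eq_reindex hZ hW hL,
    conjTranspose_fromCols_mul_mul_fromCols_of_conjTranspose_mul_mul_eq_zero hS hVSW, hVS]

theorem shear_congr_eq_reindex_fromBlocks_of_conjTranspose_mul_eq {D : Matrix m₁ m₁ R}
    (hH : H.IsHermitian) (hVS : Vᴴ * S * V = 1) (hVH : Vᴴ * H = D * (Vᴴ * S))
    (hZ : Z = (fromCols V Y).submatrix id e.symm) (hW : W = Y - V * (Vᴴ * S * Y))
    (hL : L = reindex e e (fromBlocks 1 0 (-(Vᴴ * S * Y))ᴴ 1)) :
    L * (Zᴴ * H * Z) * Lᴴ = reindex e e (fromBlocks D 0 0 (Wᴴ * H * W)) := by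
  have hVHW : Vᴴ * H * W = 0 := by
    rw [hVH, Matrix.mul_assoc, hW, conjTranspose_mul_mul_sub_mul_eq_zero hVS, Matrix.mul_zero]
  rw [shear_congr_eq_reindex hZ hW hL,
    conjTranspose_fromCols_mul_mul_fromCols_of_conjTranspose_mul_mul_eq_zero hH hVHW, hVH,
    Matrix.mul_assoc, hVS, Matrix.mul_one]

end Pencil

theorem det_sub_smul_eq_of_congr {R κ m₁ m₂ : Type*} [CommRing R] [StarRing R] [Fintype κ]
    [DecidableEq κ] [Fintype m₁] [Fintype m₂] [DecidableEq m₁] [DecidableEq m₂]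
    {A B L : Matrix κ κ R} (e : m₁ ⊕ m₂ ≃ κ) (hL : L.det = 1)
    {P : Matrix m₁ m₁ R} {Q T : Matrix m₂ m₂ R}
    (hA : L * A * Lᴴ = reindex e e (fromBlocks P 0 0 Q))
    (hB : L * B * Lᴴ = reindex e e (fromBlocks 1 0 0 T)) (μ : R) :
    (A - μ • B).det = (P - μ • 1).det * (Q - μ • T).det := by
  have hsplit : L * (A - μ • B) * Lᴴ = reindex e e (fromBlocks (P - μ • 1) 0 0 (Q - μ • T)) := by
    rw [Matrix.mul_sub, Matrix.sub_mul, Matrix.mul_smul, Matrix.smul_mul, hA, hB]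
    ext i j
    rcases h : e.symm i with a | a <;> rcases h' : e.symm j with b | b <;> simp [h, h']
  calc (A - μ • B).det = (L * (A - μ • B) * Lᴴ).det := by
        rw [det_mul, det_mul, det_conjTranspose, hL, star_one, one_mul, mul_one]
    _ = (P - μ • 1).det * (Q - μ • T).det := by
        rw [hsplit, det_reindex_self, det_fromBlocks_zero₂₁]

end Matrix

/-- Block factorization of the projected pencil: with `Z = [U_{i−1} u p]`,
`U_{i−1}ᴴ S u = 0`, `uᴴ S u = 1`, the pair `(Zᴴ H Z, Zᴴ S Z)` is congruent via a unit lower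
triangular `L` to `(diag(Λ_{i−1}, H⊥), diag(I, S⊥))` where `H⊥ = Z⊥ᴴ H Z⊥`,
`S⊥ = Z⊥ᴴ S Z⊥`, `Z⊥ = [u p⊥]`, `p⊥ = U_{i−1}ᶜ (U_{i−1}ᶜ)ᴴ S p`. Consequently
`det(Zᴴ H Z − μ Zᴴ S Z) = det(Λ_{i−1} − μI) · det(H⊥ − μ S⊥)` for all `μ`. -/
theorem stmt7 {n m : ℕ} (hm : m ≤ n)
    (H S U Λ : Matrix (Fin n) (Fin n) ℂ) (lam : Fin n → ℝ)
    (hH : H.IsHermitian) (hS : S.PosDef)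
    (hΛ : Λ = Matrix.diagonal fun k => (lam k : ℂ))
    (hortho : Uᴴ * S * U = 1)
    (heig : H * U = S * U * Λ)
    (u p : Fin n → ℂ)
    (huorth : ∀ k : Fin n, (k : ℕ) < m → (Uᴴ *ᵥ (S *ᵥ u)) k = 0)
    (Z : Matrix (Fin n) (Fin (m + 2)) ℂ)
    (hZ : Z = fun (k : Fin n) (j : Fin (m + 2)) =>
      if h : (j : ℕ) < m then U k ⟨(j : ℕ), by omega⟩
      else if (j : ℕ) = m then u k else p k)
    (Λm : Matrix (Fin m) (Fin m) ℂ)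
    (hΛm : Λm = Matrix.diagonal fun j : Fin m => (lam (Fin.castLE hm j) : ℂ))
    (pperp : Fin n → ℂ)
    (hpperp : pperp = U *ᵥ fun k => if (k : ℕ) < m then 0 else (Uᴴ *ᵥ (S *ᵥ p)) k)
    (Zperp : Matrix (Fin n) (Fin 2) ℂ)
    (hZperp : Zperp = fun (k : Fin n) (j : Fin 2) => if (j : ℕ) = 0 then u k else pperp k)
    (Hperp Sperp : Matrix (Fin 2) (Fin 2) ℂ)
    (hHperp : Hperp = Zperpᴴ * H * Zperp)
    (hSperp : Sperp = Zperpᴴ * S * Zperp) :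
    (∃ L : Matrix (Fin (m + 2)) (Fin (m + 2)) ℂ,
      (∀ i j : Fin (m + 2), i < j → L i j = 0) ∧ (∀ i, L i i = 1) ∧
      L * (Zᴴ * H * Z) * Lᴴ =
        (Matrix.reindex finSumFinEquiv finSumFinEquiv)
          (Matrix.fromBlocks Λm 0 0 Hperp) ∧
      L * (Zᴴ * S * Z) * Lᴴ =
        (Matrix.reindex finSumFinEquiv finSumFinEquiv)
          (Matrix.fromBlocks (1 : Matrix (Fin m) (Fin m) ℂ) 0 0 Sperp)) ∧
    ∀ μ : ℂ, (Zᴴ * H * Z - μ • (Zᴴ * S * Z)).det =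
      (Λm - μ • (1 : Matrix (Fin m) (Fin m) ℂ)).det * (Hperp - μ • Sperp).det := by
  classical
  set V := U.submatrix id (Fin.castLE hm)
  set Y : Matrix (Fin n) (Fin 2) ℂ := fun k j => if (j : ℕ) = 0 then u k else p k
  set L : Matrix (Fin (m + 2)) (Fin (m + 2)) ℂ :=
    reindex finSumFinEquiv finSumFinEquiv (fromBlocks 1 0 (-(Vᴴ * S * Y))ᴴ 1)
  have hVS : Vᴴ * S * V = 1 := by
    rw [conjTranspose_submatrix_mul_mul_submatrix, hortho,
      submatrix_one _ (Fin.castLE_injective hm)]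
  have hVH : Vᴴ * H = Λm * (Vᴴ * S) := by
    subst hΛ hΛm
    exact conjTranspose_mul_eq_mul_conjTranspose_mul_of_mul_eq hH hS.isHermitian
      (isHermitian_diagonal_of_self_adjoint _ (by ext; simp))
      (mul_submatrix_eq_of_mul_eq_mul_diagonal heig _)
  have hZV : Z = (fromCols V Y).submatrix id finSumFinEquiv.symm := by
    ext k j
    induction j using Fin.addCases with
    | left j => simp [hZ, V]; rfl
    | right j => fin_cases j <;> simp [hZ] <;> rfl
  have hVu : Vᴴ *ᵥ (S *ᵥ u) = 0 := funext fun i => huorth _ i.isLt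
  have hZperpV : Zperp = Y - V * (Vᴴ * S * Y) := by
    ext k j
    rw [Matrix.sub_apply, mul_mul_mul_apply]
    fin_cases j
    · simp [hZperp, Y, hVu]
    · simp only [hZperp, Y, hpperp, mulVec_ite_lt_zero_eq_sub hm hortho]
      simp [V]
  have hHblock := hHperp ▸
    shear_congr_eq_reindex_fromBlocks_of_conjTranspose_mul_eq hH hVS hVH hZV hZperpV rfl
  have hSblock := hSperp ▸
    shear_congr_eq_reindex_fromBlocks_one hS.isHermitian hVS hZV hZperpV rfl
  exact ⟨⟨L, fun _ _ => reindex_fromBlocks_one_zero_one_apply_of_lt _,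
    reindex_fromBlocks_one_zero_one_apply_self _, hHblock, hSblock⟩,
    det_sub_smul_eq_of_congr _ (det_reindex_fromBlocks_one_zero_one _ _) hHblock hSblock⟩
end

section
/- If for every j the preconditioner K_{i;j} is effectively positive definite and sup_j κ(K^c_{i;j}) = q < ∞, and the initial value satisfies λᵢ < λ_{i;0} < λ_{i+1}, then the monotonically decreasing sequence λ_{i;j} produced by PSD-id converges to λᵢ and ‖r_{i;j}‖_{S^{−1}} → 0 as j → ∞. -/
open Matrix Filter
open scoped ComplexOrder

private lemma psd_sandwich {n : ℕ} (A M : Matrix (Fin n) (Fin n) ℂ) (x y : Fin n → ℂ) :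
    star (A *ᵥ x) ⬝ᵥ (M *ᵥ (A *ᵥ y)) = star x ⬝ᵥ ((Aᴴ * M * A) *ᵥ y) := by
  rw [star_mulVec, Matrix.mulVec_mulVec, Matrix.dotProduct_mulVec,
    Matrix.vecMul_vecMul, Matrix.dotProduct_mulVec, Matrix.mul_assoc]

private lemma psd_quad_re {n : ℕ} (d : Fin n → ℝ) (c : Fin n → ℂ) :
    (star c ⬝ᵥ ((Matrix.diagonal fun k => (d k : ℂ)) *ᵥ c)).re
      = ∑ k, d k * Complex.normSq (c k) := by
  simp only [dotProduct, Matrix.mulVec_diagonal, Pi.star_apply]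
  rw [Complex.re_sum]
  refine Finset.sum_congr rfl fun k _ => ?_
  have h : star (c k) * ((d k : ℂ) * c k) = ((d k * Complex.normSq (c k) : ℝ) : ℂ) := by
    push_cast
    rw [Complex.normSq_eq_conj_mul_self]
    show (starRingEnd ℂ) (c k) * (_ * _) = _
    ring
  rw [h, Complex.ofReal_re]

/-- Theorem 1 of the paper: under uniformly bounded condition numbers of the effectively
positive definite preconditioners (expressed through the one-step decrease bound of
Lemma 1 with uniform constant `q`), if `λᵢ < λ_{i;0} < λ_{i+1}`, the monotonically
decreasing PSD-id sequence `λ_{i;j}` converges to `λᵢ` and `‖r_{i;j}‖_{S⁻¹} → 0`.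
(0-based: the target eigenvalue has index `m`.) -/
theorem stmt10 {n m : ℕ} (hmn : m + 1 < n)
    (H S U Λ : Matrix (Fin n) (Fin n) ℂ) (lam : Fin n → ℝ)
    (hH : H.IsHermitian) (hS : S.PosDef)
    (hΛ : Λ = Matrix.diagonal fun k => (lam k : ℂ))
    (hmono : Monotone lam)
    (hsimple : (∀ k : Fin n, (k : ℕ) < m → lam k < lam ⟨m, by omega⟩) ∧
      lam ⟨m, by omega⟩ < lam ⟨m + 1, hmn⟩)
    (hortho : Uᴴ * S * U = 1)
    (heig : H * U = S * U * Λ)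
    (q : ℝ) (hq : 1 ≤ q)
    (u : ℕ → Fin n → ℂ) (lamj : ℕ → ℝ) (r : ℕ → Fin n → ℂ)
    (huorth : ∀ j, ∀ k : Fin n, (k : ℕ) < m → (Uᴴ *ᵥ (S *ᵥ u j)) k = 0)
    (hunorm : ∀ j, star (u j) ⬝ᵥ (S *ᵥ u j) = 1)
    (hlamj : ∀ j, (lamj j : ℂ) = star (u j) ⬝ᵥ (H *ᵥ u j))
    (hrdef : ∀ j, r j = H *ᵥ u j - (lamj j : ℂ) • (S *ᵥ u j))
    (hinit : lam ⟨m, by omega⟩ < lamj 0 ∧ lamj 0 < lam ⟨m + 1, hmn⟩)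
    (hge : ∀ j, lam ⟨m, by omega⟩ ≤ lamj j)
    (hdec : ∀ j,
      Real.sqrt (((lam ⟨n - 1, by omega⟩ - lam ⟨m, by omega⟩) / 2) ^ 2 +
          (Real.sqrt ((star (r j) ⬝ᵥ (S⁻¹ *ᵥ (r j))).re) / q) ^ 2) -
        (lam ⟨n - 1, by omega⟩ - lam ⟨m, by omega⟩) / 2 ≤ lamj j - lamj (j + 1)) :
    Tendsto lamj atTop (nhds (lam ⟨m, by omega⟩)) ∧
    Tendsto (fun j => Real.sqrt ((star (r j) ⬝ᵥ (S⁻¹ *ᵥ (r j))).re)) atTop (nhds 0) := by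
  have hm : m < n := by omega
  have hn1 : n - 1 < n := by omega
  set a : ℝ := lam ⟨m, by omega⟩ with ha
  set b : ℝ := lam ⟨m + 1, hmn⟩ with hb
  set t : ℝ := lam ⟨n - 1, by omega⟩ with ht
  set R : ℕ → ℝ := fun j => (star (r j) ⬝ᵥ (S⁻¹ *ᵥ (r j))).re with hRdef
  -- matrix preliminaries
  have hdet : IsUnit S.det := (Matrix.isUnit_iff_isUnit_det S).mp hS.isUnit
  have hSU : U * (Uᴴ * S) = 1 := mul_eq_one_comm.mp hortho
  set c : ℕ → Fin n → ℂ := fun j => (Uᴴ * S) *ᵥ u j with hc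
  have huc : ∀ j, u j = U *ᵥ c j := by
    intro j
    show u j = U *ᵥ ((Uᴴ * S) *ᵥ u j)
    rw [Matrix.mulVec_mulVec, hSU, Matrix.one_mulVec]
  set p : ℕ → Fin n → ℝ := fun j k => Complex.normSq (c j k) with hp
  have hp0 : ∀ j k, 0 ≤ p j k := fun j k => Complex.normSq_nonneg _
  have hczero : ∀ j, ∀ k : Fin n, (k : ℕ) < m → c j k = 0 := by
    intro j k hk
    show ((Uᴴ * S) *ᵥ u j) k = 0
    rw [← Matrix.mulVec_mulVec]
    exact huorth j k hk
  have hUHU : Uᴴ * H * U = Λ := by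
    rw [Matrix.mul_assoc, heig]
    simp only [← Matrix.mul_assoc]
    rw [hortho, Matrix.one_mul]
  -- (A) sum of weights is 1
  have hA : ∀ j, ∑ k, p j k = 1 := by
    intro j
    have h1 := hunorm j
    rw [huc j, psd_sandwich, hortho] at h1
    have h2 := congrArg Complex.re h1
    have h3 : ((1 : Matrix (Fin n) (Fin n) ℂ)) = Matrix.diagonal fun _ : Fin n => ((1:ℝ) : ℂ) := by
      simp
    rw [h3, psd_quad_re] at h2
    simpa using h2
  -- (B) Rayleigh quotient as a sum
  have hB : ∀ j, lamj j = ∑ k, lam k * p j k := by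
    intro j
    have h1 := hlamj j
    rw [huc j, psd_sandwich, hUHU, hΛ] at h1
    have h2 := congrArg Complex.re h1
    rw [psd_quad_re] at h2
    simpa using h2
  -- (C) residual norm as a sum
  have hC : ∀ j, R j = ∑ k, (lam k - lamj j) ^ 2 * p j k := by
    intro j
    set E : Matrix (Fin n) (Fin n) ℂ :=
      Matrix.diagonal fun k => ((lam k - lamj j : ℝ) : ℂ) with hE
    have hrc : r j = (S * U * E) *ᵥ c j := by
      rw [hrdef j, huc j]
      have hEeq : Λ - (lamj j : ℂ) • 1 = E := by
        rw [hΛ, hE]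
        ext i k
        rcases eq_or_ne i k with h | h
        · subst h
          simp only [Matrix.sub_apply, Matrix.smul_apply, Matrix.diagonal_apply_eq,
            Matrix.one_apply_eq, smul_eq_mul, mul_one, Complex.ofReal_sub]
        · simp [Matrix.diagonal_apply_ne _ h, Matrix.one_apply_ne h]
      rw [← hEeq]
      simp only [Matrix.mul_sub, Matrix.mul_smul, Matrix.mul_one, Matrix.sub_mulVec,
        Matrix.smul_mulVec, Matrix.mulVec_mulVec, heig]
    have hMSM : (S * U * E)ᴴ * S⁻¹ * (S * U * E)
        = Matrix.diagonal fun k => (((lam k - lamj j) ^ 2 : ℝ) : ℂ) := by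
      have hEH : Eᴴ = E := by
        have hstar : (star fun k : Fin n => ((lam k - lamj j : ℝ) : ℂ))
            = fun k : Fin n => ((lam k - lamj j : ℝ) : ℂ) := by
          funext k
          simp [Complex.conj_ofReal]
        rw [hE, Matrix.diagonal_conjTranspose, hstar]
      have hSH : Sᴴ = S := hS.isHermitian
      calc (S * U * E)ᴴ * S⁻¹ * (S * U * E)
          = Eᴴ * (Uᴴ * (Sᴴ * (S⁻¹ * (S * (U * E))))) := by
            simp only [Matrix.conjTranspose_mul, Matrix.mul_assoc]
        _ = Eᴴ * (Uᴴ * (S * (U * E))) := by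
            rw [← Matrix.mul_assoc S⁻¹, Matrix.nonsing_inv_mul S hdet, Matrix.one_mul, hSH]
        _ = E * E := by
            rw [hEH]
            congr 1
            calc Uᴴ * (S * (U * E)) = (Uᴴ * S * U) * E := by simp only [Matrix.mul_assoc]
              _ = E := by rw [hortho, Matrix.one_mul]
        _ = Matrix.diagonal fun k => (((lam k - lamj j) ^ 2 : ℝ) : ℂ) := by
            rw [hE, Matrix.diagonal_mul_diagonal]
            refine congrArg Matrix.diagonal (funext fun k => ?_)
            push_cast
            ring
    show (star (r j) ⬝ᵥ (S⁻¹ *ᵥ (r j))).re = _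
    rw [hrc, psd_sandwich, hMSM, psd_quad_re]
  have hR0 : ∀ j, 0 ≤ R j := by
    intro j
    rw [hC j]
    exact Finset.sum_nonneg fun k _ => mul_nonneg (sq_nonneg _) (hp0 j k)
  -- real analysis
  have hta : a ≤ t := hmono (by simp [Fin.le_def]; omega)
  have hG0 : 0 ≤ (t - a) / 2 := by linarith
  have hδ : 0 < b - lamj 0 := sub_pos.mpr hinit.2
  have hanti : Antitone lamj := by
    apply antitone_nat_of_succ_le
    intro j
    have h1 := hdec j
    have h2 : (t - a) / 2 ≤ Real.sqrt (((t - a) / 2) ^ 2 + (Real.sqrt (R j) / q) ^ 2) := by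
      have h2' : Real.sqrt (((t - a) / 2) ^ 2)
          ≤ Real.sqrt (((t - a) / 2) ^ 2 + (Real.sqrt (R j) / q) ^ 2) :=
        Real.sqrt_le_sqrt (le_add_of_nonneg_right (by positivity))
      rwa [Real.sqrt_sq hG0] at h2'
    linarith
  have hle0 : ∀ j, lamj j ≤ lamj 0 := fun j => hanti (Nat.zero_le j)
  -- (F5): lamj j - a ≤ C * R j
  set δ : ℝ := b - lamj 0 with hδdef
  set C : ℝ := (t - a) / δ ^ 2 with hCdef
  have hF5 : ∀ j, lamj j - a ≤ C * R j := by
    intro j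
    have hsum : lamj j - a = ∑ k, (lam k - a) * p j k := by
      simp only [sub_mul]
      rw [Finset.sum_sub_distrib, ← Finset.mul_sum, hA j, mul_one, ← hB j]
    rw [hsum, hC j, Finset.mul_sum]
    apply Finset.sum_le_sum
    intro k _
    have hCnn : 0 ≤ C := div_nonneg (by linarith) (sq_nonneg _)
    rcases lt_trichotomy (k : ℕ) m with hk | hk | hk
    · have hpz : p j k = 0 := by
        show Complex.normSq (c j k) = 0
        rw [hczero j k hk]
        simp
      rw [hpz, mul_zero, mul_zero, mul_zero]
    · have hk' : k = ⟨m, hm⟩ := Fin.ext (by simpa using hk)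
      have hzero : lam k - a = 0 := by rw [hk']; exact sub_self a
      rw [hzero, zero_mul]
      exact mul_nonneg hCnn (mul_nonneg (sq_nonneg _) (hp0 j k))
    · have hbk : b ≤ lam k := hmono (by simp [Fin.le_def]; omega)
      have htk : lam k ≤ t := hmono (by simp [Fin.le_def]; omega)
      have h1 : δ ≤ lam k - lamj j := by
        have := hle0 j
        have : δ = b - lamj 0 := hδdef
        linarith
      have h2 : δ ^ 2 ≤ (lam k - lamj j) ^ 2 := by nlinarith
      have key : lam k - a ≤ C * (lam k - lamj j) ^ 2 := by
        rw [hCdef, div_mul_eq_mul_div, le_div_iff₀ (by positivity)]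
        nlinarith
      calc (lam k - a) * p j k ≤ (C * (lam k - lamj j) ^ 2) * p j k :=
            mul_le_mul_of_nonneg_right key (hp0 j k)
        _ = C * ((lam k - lamj j) ^ 2 * p j k) := by ring
  -- convergence of lamj via monotone convergence
  have hbdd : BddBelow (Set.range lamj) := ⟨a, by rintro x ⟨j, rfl⟩; exact hge j⟩
  have hconv : Tendsto lamj atTop (nhds (⨅ j, lamj j)) := tendsto_atTop_ciInf hanti hbdd
  have hd : Tendsto (fun j => lamj j - lamj (j + 1)) atTop (nhds 0) := by
    have h2 : Tendsto (fun j => lamj (j + 1)) atTop (nhds (⨅ j, lamj j)) :=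
      hconv.comp (tendsto_add_atTop_nat 1)
    have h3 := hconv.sub h2
    rw [sub_self] at h3
    exact h3
  -- bound R by the decrease
  have hq0 : 0 < q := lt_of_lt_of_le one_pos hq
  have hRb : ∀ j, R j ≤ q ^ 2 * (2 * ((t - a) / 2) * (lamj j - lamj (j + 1))
      + (lamj j - lamj (j + 1)) ^ 2) := by
    intro j
    have h1 := hdec j
    set d := lamj j - lamj (j + 1) with hdd
    have hd0 : 0 ≤ d := sub_nonneg.mpr (hanti (Nat.le_succ j))
    have hsq : ((t - a) / 2) ^ 2 + (Real.sqrt (R j) / q) ^ 2 ≤ ((t - a) / 2 + d) ^ 2 := by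
      have h2 : Real.sqrt (((t - a) / 2) ^ 2 + (Real.sqrt (R j) / q) ^ 2) ≤ (t - a) / 2 + d := by
        linarith
      have h3 : 0 ≤ ((t - a) / 2) ^ 2 + (Real.sqrt (R j) / q) ^ 2 := by positivity
      calc ((t - a) / 2) ^ 2 + (Real.sqrt (R j) / q) ^ 2
          = Real.sqrt (((t - a) / 2) ^ 2 + (Real.sqrt (R j) / q) ^ 2) ^ 2 := (Real.sq_sqrt h3).symm
        _ ≤ ((t - a) / 2 + d) ^ 2 := by
            apply pow_le_pow_left₀ (Real.sqrt_nonneg _) h2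
    have h4 : (Real.sqrt (R j)) ^ 2 = R j := Real.sq_sqrt (hR0 j)
    have h5 : (Real.sqrt (R j) / q) ^ 2 = R j / q ^ 2 := by
      rw [div_pow, h4]
    rw [h5] at hsq
    have h6 : R j / q ^ 2 ≤ 2 * ((t - a) / 2) * d + d ^ 2 := by nlinarith
    calc R j = q ^ 2 * (R j / q ^ 2) := by field_simp
      _ ≤ q ^ 2 * (2 * ((t - a) / 2) * d + d ^ 2) := by
          apply mul_le_mul_of_nonneg_left h6 (by positivity)
  have hRtend : Tendsto R atTop (nhds 0) := by
    apply squeeze_zero hR0 hRb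
    have : Tendsto (fun j => q ^ 2 * (2 * ((t - a) / 2) * (lamj j - lamj (j + 1))
        + (lamj j - lamj (j + 1)) ^ 2)) atTop
        (nhds (q ^ 2 * (2 * ((t - a) / 2) * 0 + 0 ^ 2))) :=
      tendsto_const_nhds.mul ((tendsto_const_nhds.mul hd).add (hd.pow 2))
    have h0 : q ^ 2 * (2 * ((t - a) / 2) * 0 + 0 ^ 2) = 0 := by ring
    rw [h0] at this
    exact this
  have hsub : Tendsto (fun j => lamj j - a) atTop (nhds 0) := by
    apply squeeze_zero (fun j => sub_nonneg.mpr (hge j)) hF5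
    have : Tendsto (fun j => C * R j) atTop (nhds (C * 0)) := tendsto_const_nhds.mul hRtend
    rw [mul_zero] at this
    exact this
  constructor
  · have : Tendsto (fun j => lamj j - a + a) atTop (nhds (0 + a)) :=
      hsub.add tendsto_const_nhds
    simpa using this
  · have := hRtend.sqrt
    simpa using this
end
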